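/- arXiv:1303.3261 — 2 statements merged into one kernel-verified Lean document; each statement's English description precedes it below -/
import Mathlib

section
/- Let A be a Hopf *-algebra over ℂ: a Hopf algebra over ℂ with comultiplication Δ, counit ε and antipode S, which is also a *-algebra, such that S is bijective, ε(S(a)) = ε(a) for all a, S⁻¹(a) = (S(a*))* for all a, and (as in any Hopf algebra with bijective antipode) for every a with Δ(a) = Σᵢ a_{(1,i)} ⊗ a_{(2,i)} one has Σᵢ S(a_{(1,i)})·a_{(2,i)} = ε(a)·1 = Σᵢ S⁻¹(a_{(2,i)})·a_{(1,i)} and Σᵢ ε(a_{(1,i)})·a_{(2,i)} = a = Σᵢ a_{(1,i)}·ε(a_{(2,i)}). Let H be a complex Hilbert space whose inner product ⟨·,·⟩ is linear in the first variable, let c : A → H be ℂ-linear, and define L : A → ℂ by L(a) = ½ Σᵢ ⟨c(a_{(1,i)}), c(S((a_{(2,i)})*))⟩ whenever Δ(a) = Σᵢ a_{(1,i)} ⊗ a_{(2,i)} (this is well defined because (a,b) ↦ ⟨c(a), c(S(b*))⟩ is ℂ-bilinear). Assume that L(1) = 0 and that c and L satisfy ⟨c(a), c(b)⟩ = −L(b*a)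 + ε(a)·conj(L(b)) + L(a)·conj(ε(b)) for all a, b ∈ A (as holds when c is a real cocycle). Then L(S(a)) = L(a) for all a ∈ A. -/
/-!
`L` is hermitian: the cocycle relation at `(b, 1)` and `(1, b)`, together with `L 1 = 0`, gives
`L (star b) = conj (L b)`. Applying the cocycle relation to each Sweedler term
`⟪c (S (a₂*)), c a₁⟫` and using `S (a₂*)* = S⁻¹ a₂` turns `2 L a` into
`-L (Σ S⁻¹ a₂ a₁) + L (S⁻¹ (Σ ε(a₁) a₂)) + L (Σ ε(a₂) a₁)`, which is
`-ε(a) L 1 + L (S⁻¹ a) + L a` by the antipode and counit identities, so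
`L a = L (S⁻¹ a)`; substituting `a = S b` gives the theorem.
-/

open scoped TensorProduct

namespace VergniouxFunctional

variable {A : Type*} [Ring A] [Algebra ℂ A] [StarRing A]
  {H : Type*} [NormedAddCommGroup H] [InnerProductSpace ℂ H]

/-- The relation between a generating functional `L` and its cocycle `c` in a Schürmann triple. -/
def IsSchurmannPair (ε : A →⋆ₐ[ℂ] ℂ) (c : A →ₗ[ℂ] H) (L : A →ₗ[ℂ] ℂ) :
    Prop :=
  ∀ a b : A, (inner ℂ (c b) (c a) : ℂ)
    = -(L (star b * a)) + ε a * (starRingEnd ℂ) (L b) + L a * (starRingEnd ℂ) (ε b)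

variable {ε : A →⋆ₐ[ℂ] ℂ} {c : A →ₗ[ℂ] H} {L : A →ₗ[ℂ] ℂ}

theorem IsSchurmannPair.inner_map_one_left (hcL : IsSchurmannPair ε c L) (hL1 : L 1 = 0)
    (b : A) : (inner ℂ (c 1) (c b) : ℂ) = 0 := by
  simpa [hL1] using hcL b 1

theorem IsSchurmannPair.map_star (hcL : IsSchurmannPair ε c L) (hL1 : L 1 = 0) (b : A) :
    L (star b) = (starRingEnd ℂ) (L b) := by
  have h := hcL 1 b
  rw [← inner_conj_symm, hcL.inner_map_one_left hL1, map_zero] at h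
  simp only [mul_one, map_one, hL1, zero_mul, add_zero, one_mul] at h
  linear_combination h

theorem IsSchurmannPair.inner_map_antipode_star (hcL : IsSchurmannPair ε c L) (hL1 : L 1 = 0)
    {S Sinv : A →ₗ[ℂ] A} (hεS : ∀ a, ε (S a) = ε a)
    (hSinvStar : ∀ a, Sinv a = star (S (star a))) (x y : A) :
    (inner ℂ (c (S (star y))) (c x) : ℂ)
      = -(L (Sinv y * x)) + ε x * L (Sinv y) + L x * ε y := by
  have hstar : star (S (star y)) = Sinv y := (hSinvStar y).symm
  have hL : (starRingEnd ℂ) (L (S (star y))) = L (Sinv y) := by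
    rw [← hcL.map_star hL1, hstar]
  have hε : (starRingEnd ℂ) (ε (S (star y))) = ε y := by
    rw [hεS, StarHomClass.map_star, starRingEnd_apply, star_star]
  rw [hcL x (S (star y)), hstar, hL, hε]

theorem IsSchurmannPair.map_antipode_inv (hcL : IsSchurmannPair ε c L) (hL1 : L 1 = 0)
    {S Sinv : A →ₗ[ℂ] A} (hεS : ∀ a, ε (S a) = ε a)
    (hSinvStar : ∀ a, Sinv a = star (S (star a)))
    {x : A} {m : ℕ} {a1 a2 : Fin m → A}
    (hantipode : ∑ i, Sinv (a2 i) * a1 i = ε x • (1 : A))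
    (hcounit₁ : ∑ i, ε (a1 i) • a2 i = x) (hcounit₂ : ∑ i, ε (a2 i) • a1 i = x)
    (hLx : L x = (1 / 2 : ℂ) * ∑ i, (inner ℂ (c (S (star (a2 i)))) (c (a1 i)) : ℂ)) :
    L (Sinv x) = L x := by
  have hsum₁ : ∑ i, L (Sinv (a2 i) * a1 i) = 0 := by
    rw [← map_sum, hantipode, map_smul, hL1, smul_zero]
  have hsum₂ : ∑ i, ε (a1 i) * L (Sinv (a2 i)) = L (Sinv x) := by
    simp only [← smul_eq_mul, ← map_smul, ← map_sum, hcounit₁]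
  have hsum₃ : ∑ i, L (a1 i) * ε (a2 i) = L x := by
    simp only [mul_comm (L _), ← smul_eq_mul, ← map_smul, ← map_sum, hcounit₂]
  simp only [hcL.inner_map_antipode_star hL1 hεS hSinvStar, Finset.sum_add_distrib,
    Finset.sum_neg_distrib, hsum₁, hsum₂, hsum₃] at hLx
  linear_combination -2 * hLx

end VergniouxFunctional

theorem statement2_general {A : Type*} [Ring A] [Algebra ℂ A] [StarRing A]
    {H : Type*} [NormedAddCommGroup H] [InnerProductSpace ℂ H]
    (Δ : A →ₗ[ℂ] A ⊗[ℂ] A) (ε : A →⋆ₐ[ℂ] ℂ) (S Sinv : A →ₗ[ℂ] A)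
    (hS₁ : ∀ a, Sinv (S a) = a)
    (hεS : ∀ a, ε (S a) = ε a)
    (hSinvStar : ∀ a, Sinv a = star (S (star a)))
    (hSweedler : ∀ a : A, ∃ (m : ℕ) (a1 a2 : Fin m → A),
        Δ a = ∑ i, a1 i ⊗ₜ[ℂ] a2 i)
    (hAntipode : ∀ (a : A) (m : ℕ) (a1 a2 : Fin m → A),
        Δ a = ∑ i, a1 i ⊗ₜ[ℂ] a2 i →
        (∑ i, S (a1 i) * a2 i = ε a • (1 : A)) ∧
        (∑ i, Sinv (a2 i) * a1 i = ε a • (1 : A)) ∧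
        (∑ i, ε (a1 i) • a2 i = a) ∧
        (∑ i, ε (a2 i) • a1 i = a))
    (c : A →ₗ[ℂ] H) (L : A →ₗ[ℂ] ℂ)
    (hLdef : ∀ (a : A) (m : ℕ) (a1 a2 : Fin m → A),
        Δ a = ∑ i, a1 i ⊗ₜ[ℂ] a2 i →
        L a = (1 / 2 : ℂ) * ∑ i, (inner ℂ (c (S (star (a2 i)))) (c (a1 i)) : ℂ))
    (hL1 : L 1 = 0)
    (hcocycle : ∀ a b : A, (inner ℂ (c b) (c a) : ℂ)
        = -(L (star b * a)) + ε a * (starRingEnd ℂ) (L b) + L a * (starRingEnd ℂ) (ε b)) :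
    ∀ a : A, L (S a) = L a := by
  intro a
  obtain ⟨m, a1, a2, hΔ⟩ := hSweedler (S a)
  obtain ⟨-, hantipode, hcounit₁, hcounit₂⟩ := hAntipode (S a) m a1 a2 hΔ
  have h := VergniouxFunctional.IsSchurmannPair.map_antipode_inv hcocycle hL1 hεS hSinvStar
    hantipode hcounit₁ hcounit₂ (hLdef (S a) m a1 a2 hΔ)
  rwa [hS₁, eq_comm] at h

/-- Let `A` be a Hopf *-algebra over ℂ with comultiplication `Δ`, counit `ε`
and antipode `S` (bijective, with inverse `Sinv`), satisfying `ε ∘ S = ε`,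
`S⁻¹ a = (S a*)*`, the antipode identities and the counit identities for any Sweedler
decomposition `Δ a = Σᵢ a1 i ⊗ a2 i`.  Let `c : A → H` be ℂ-linear into a complex Hilbert
space and let `L : A → ℂ` be given by Vergnioux's formula
`L a = ½ Σᵢ ⟨c (a1 i), c (S (star (a2 i)))⟩` (inner product linear in the first variable;
in Mathlib's convention this is `⟪c (S (star (a2 i))), c (a1 i)⟫`).  If `L 1 = 0` and
`⟨c a, c b⟩ = -L(b* a) + ε(a) conj(L b) + L(a) conj(ε b)` for all `a b` (as holds for a
real cocycle `c`), then `L ∘ S = L`. -/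
theorem statement2 {A : Type*} [Ring A] [Algebra ℂ A] [StarRing A] [StarModule ℂ A]
    {H : Type*} [NormedAddCommGroup H] [InnerProductSpace ℂ H]
    (Δ : A →ₗ[ℂ] A ⊗[ℂ] A) (ε : A →⋆ₐ[ℂ] ℂ) (S Sinv : A →ₗ[ℂ] A)
    (hS₁ : ∀ a, Sinv (S a) = a) (hS₂ : ∀ a, S (Sinv a) = a)
    (hεS : ∀ a, ε (S a) = ε a)
    (hSinvStar : ∀ a, Sinv a = star (S (star a)))
    (hSweedler : ∀ a : A, ∃ (m : ℕ) (a1 a2 : Fin m → A),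
        Δ a = ∑ i, a1 i ⊗ₜ[ℂ] a2 i)
    (hAntipode : ∀ (a : A) (m : ℕ) (a1 a2 : Fin m → A),
        Δ a = ∑ i, a1 i ⊗ₜ[ℂ] a2 i →
        (∑ i, S (a1 i) * a2 i = ε a • (1 : A)) ∧
        (∑ i, Sinv (a2 i) * a1 i = ε a • (1 : A)) ∧
        (∑ i, ε (a1 i) • a2 i = a) ∧
        (∑ i, ε (a2 i) • a1 i = a))
    (c : A →ₗ[ℂ] H) (L : A →ₗ[ℂ] ℂ)
    (hLdef : ∀ (a : A) (m : ℕ) (a1 a2 : Fin m → A),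
        Δ a = ∑ i, a1 i ⊗ₜ[ℂ] a2 i →
        L a = (1 / 2 : ℂ) * ∑ i, (inner ℂ (c (S (star (a2 i)))) (c (a1 i)) : ℂ))
    (hL1 : L 1 = 0)
    (hcocycle : ∀ a b : A, (inner ℂ (c b) (c a) : ℂ)
        = -(L (star b * a)) + ε a * (starRingEnd ℂ) (L b) + L a * (starRingEnd ℂ) (ε b)) :
    ∀ a : A, L (S a) = L a :=
  statement2_general Δ ε S Sinv hS₁ hεS hSinvStar hSweedler hAntipode c L hLdef hL1 hcocycle
end

section
/- Let I be a countable set and for each α ∈ I let n_α be a positive integer. Let (F_k)_{k≥1} be an increasing sequence of finite subsets of I whose union is I, let (β_k)_{k≥1} be positive reals increasing to ∞, and let (ε_k)_{k≥1} be positive reals with Σ_k β_k·ε_k < ∞. For each k ≥ 1 and α ∈ I let M_k^α be a Hermitian n_α×n_α complex matrix with operator norm ‖M_k^α‖ ≤ 1, such that ‖I_{n_α} − M_k^α‖ ≤ ε_k for every α ∈ F_k, and such that for each k the set {α ∈ I : ‖M_k^α‖ > 1/2} is finite. Then: (a) for every α ∈ I the series L^α := Σ_{k≥1} β_k·(I_{n_α}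 − M_k^α) converges in norm in the space of n_α×n_α matrices; (b) each L^α is Hermitian and positive semidefinite; (c) for every M > 0 there exists a finite subset F ⊆ I such that L^α − M·I_{n_α} is positive semidefinite for every α ∈ I \ F. -/
/-!
In a C*-algebra a self-adjoint `a` with `‖a‖ ≤ c` satisfies `a ≤ c • 1`, so every summand
`β k • (1 - a k)` is positive, and it dominates `(β k / 2) • 1` as soon as `‖a k‖ ≤ 1 / 2`.
Hence the sum is positive and, for `k` with `β k ≥ 2 C`, it exceeds `C • 1` off the finite set
`{α | ‖M k α‖ > 1 / 2}`. Convergence holds because `‖β k • (1 - M k α)‖ ≤ β k * ε k` once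
`α ∈ F k`. Matrices with the operator norm and the Loewner order form such a C*-algebra.
-/

open scoped ComplexOrder

open Filter

lemma summable_smul_of_eventually_norm_le {E : Type*} [NormedAddCommGroup E] [NormedSpace ℝ E]
    [CompleteSpace E] {β ε : ℕ → ℝ} {f : ℕ → E} (hβ : ∀ k, 0 ≤ β k)
    (hsum : Summable fun k => β k * ε k) (hf : ∀ᶠ k in atTop, ‖f k‖ ≤ ε k) :
    Summable fun k => β k • f k :=
  hsum.of_norm_bounded_eventually_nat <| hf.mono fun k hk => by
    rw [norm_smul, Real.norm_of_nonneg (hβ k)]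
    exact mul_le_mul_of_nonneg_left hk (hβ k)

section CStarAlgebra

variable {A : Type*} [CStarAlgebra A] [PartialOrder A] [StarOrderedRing A]

lemma IsSelfAdjoint.algebraMap_one_sub_le_one_sub {a : A} (ha : IsSelfAdjoint a) {c : ℝ}
    (h : ‖a‖ ≤ c) : algebraMap ℝ A (1 - c) ≤ 1 - a := by
  rw [map_sub, map_one]
  gcongr
  exact ha.le_algebraMap_norm_self.trans (algebraMap_mono A h)

lemma IsSelfAdjoint.one_sub_nonneg {a : A} (ha : IsSelfAdjoint a) (h : ‖a‖ ≤ 1) : 0 ≤ 1 - a := by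
  simpa using ha.algebraMap_one_sub_le_one_sub h

variable {β : ℕ → ℝ} {a : ℕ → A}

lemma tsum_smul_one_sub_nonneg (hβ : ∀ k, 0 ≤ β k) (ha : ∀ k, IsSelfAdjoint (a k))
    (h : ∀ k, ‖a k‖ ≤ 1) : 0 ≤ ∑' k, β k • (1 - a k) :=
  tsum_nonneg fun k => smul_nonneg (hβ k) ((ha k).one_sub_nonneg (h k))

lemma algebraMap_le_tsum_smul_one_sub (hβ : ∀ k, 0 ≤ β k) (ha : ∀ k, IsSelfAdjoint (a k))
    (h : ∀ k, ‖a k‖ ≤ 1) (hs : Summable fun k => β k • (1 - a k)) {j : ℕ} (hj : ‖a j‖ ≤ 1 / 2) :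
    algebraMap ℝ A (β j / 2) ≤ ∑' k, β k • (1 - a k) :=
  calc algebraMap ℝ A (β j / 2) = β j • algebraMap ℝ A (1 - 1 / 2) := by
        rw [Algebra.smul_def, ← map_mul]; congr 1; ring
    _ ≤ β j • (1 - a j) := smul_le_smul_of_nonneg_left
        ((ha j).algebraMap_one_sub_le_one_sub hj) (hβ j)
    _ ≤ ∑' k, β k • (1 - a k) :=
        hs.le_tsum j fun k _ => smul_nonneg (hβ k) ((ha k).one_sub_nonneg (h k))

end CStarAlgebra

theorem statement8_general {I : Type*} (nn : I → ℕ)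
    (F : ℕ → Finset I) (hFmono : Monotone F) (hFcover : ∀ α : I, ∃ k, α ∈ F k)
    (β : ℕ → ℝ) (hβpos : ∀ k, 0 < β k)
    (hβtop : Filter.Tendsto β Filter.atTop Filter.atTop)
    (ε : ℕ → ℝ) (hsum : Summable fun k => β k * ε k)
    (M : ∀ (_ : ℕ) (α : I), Matrix (Fin (nn α)) (Fin (nn α)) ℂ)
    (hherm : ∀ k α, (M k α).IsHermitian)
    (hnorm : ∀ k α, ‖Matrix.toEuclideanCLM (𝕜 := ℂ) (M k α)‖ ≤ 1)
    (hclose : ∀ k, ∀ α ∈ F k,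
      ‖Matrix.toEuclideanCLM (𝕜 := ℂ)
        ((1 : Matrix (Fin (nn α)) (Fin (nn α)) ℂ) - M k α)‖ ≤ ε k)
    (hfin : ∀ k, {α : I | 1 / 2 < ‖Matrix.toEuclideanCLM (𝕜 := ℂ) (M k α)‖}.Finite) :
    (∀ α, Summable fun k => β k • ((1 : Matrix (Fin (nn α)) (Fin (nn α)) ℂ) - M k α)) ∧
    (∀ α, (∑' k, β k • ((1 : Matrix (Fin (nn α)) (Fin (nn α)) ℂ) - M k α)).IsHermitian ∧
      (∑' k, β k • ((1 : Matrix (Fin (nn α)) (Fin (nn α)) ℂ) - M k α)).PosSemidef) ∧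
    (∀ C : ℝ, 0 < C → ∃ G : Finset I, ∀ α ∉ G,
      ((∑' k, β k • ((1 : Matrix (Fin (nn α)) (Fin (nn α)) ℂ) - M k α))
        - C • (1 : Matrix (Fin (nn α)) (Fin (nn α)) ℂ)).PosSemidef) := by
  -- The operator-norm topology on matrices is definitionally the product topology.
  open scoped Matrix.Norms.L2Operator MatrixOrder in {
  have hβ : ∀ k, 0 ≤ β k := fun k => (hβpos k).le
  have hsa : ∀ k α, IsSelfAdjoint (M k α) := fun k α => (hherm k α).isSelfAdjoint
  have hL : ∀ α, Summable fun k => β k • ((1 : Matrix (Fin (nn α)) (Fin (nn α)) ℂ) - M k α) := by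
    intro α
    obtain ⟨k₀, hk₀⟩ := hFcover α
    refine summable_smul_of_eventually_norm_le hβ hsum ?_
    filter_upwards [eventually_ge_atTop k₀] with k hk using hclose k α (hFmono hk hk₀)
  have hLpsd : ∀ α, (∑' k, β k • ((1 : Matrix (Fin (nn α)) (Fin (nn α)) ℂ) - M k α)).PosSemidef :=
    fun α => Matrix.nonneg_iff_posSemidef.1 (tsum_smul_one_sub_nonneg hβ (hsa · α) (hnorm · α))
  refine ⟨hL, fun α => ⟨(hLpsd α).isHermitian, hLpsd α⟩, fun C _ => ?_⟩
  obtain ⟨k, hk⟩ := (hβtop.eventually_ge_atTop (2 * C)).exists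
  refine ⟨(hfin k).toFinset, fun α hα => ?_⟩
  have hhalf : ‖M k α‖ ≤ 1 / 2 := not_lt.1 fun h => hα ((hfin k).mem_toFinset.2 h)
  rw [← Matrix.le_iff, ← Algebra.algebraMap_eq_smul_one]
  calc algebraMap ℝ _ C ≤ algebraMap ℝ _ (β k / 2) := algebraMap_mono _ (by linarith)
    _ ≤ _ := algebraMap_le_tsum_smul_one_sub hβ (hsa · α) (hnorm · α) (hL α) hhalf }

/-- Let `I` be countable with dimensions `nn α ≥ 1`, `(F k)` an increasing
sequence of finite subsets of `I` covering `I`, `(β k)` positive reals increasing to `∞`,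
`(ε k)` positive reals with `Σ β k * ε k < ∞`.  Suppose the matrices `M k α` are Hermitian
contractions (operator norm `≤ 1`) with `‖1 - M k α‖ ≤ ε k` for `α ∈ F k`, and for each
`k` the set `{α : ‖M k α‖ > 1/2}` is finite.  Then:
(a) for each `α` the series `L α = Σ_k β k • (1 - M k α)` converges in norm;
(b) each `L α` is Hermitian and positive semidefinite;
(c) for every `C > 0` there is a finite `G ⊆ I` with `L α - C • 1` positive semidefinite
for all `α ∉ G`. -/
theorem statement8 {I : Type*} [Countable I] (nn : I → ℕ) (hnn : ∀ α, 0 < nn α)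
    (F : ℕ → Finset I) (hFmono : Monotone F) (hFcover : ∀ α : I, ∃ k, α ∈ F k)
    (β : ℕ → ℝ) (hβpos : ∀ k, 0 < β k) (hβmono : Monotone β)
    (hβtop : Filter.Tendsto β Filter.atTop Filter.atTop)
    (ε : ℕ → ℝ) (hεpos : ∀ k, 0 < ε k) (hsum : Summable fun k => β k * ε k)
    (M : ∀ (_ : ℕ) (α : I), Matrix (Fin (nn α)) (Fin (nn α)) ℂ)
    (hherm : ∀ k α, (M k α).IsHermitian)
    (hnorm : ∀ k α, ‖Matrix.toEuclideanCLM (𝕜 := ℂ) (M k α)‖ ≤ 1)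
    (hclose : ∀ k, ∀ α ∈ F k,
      ‖Matrix.toEuclideanCLM (𝕜 := ℂ)
        ((1 : Matrix (Fin (nn α)) (Fin (nn α)) ℂ) - M k α)‖ ≤ ε k)
    (hfin : ∀ k, {α : I | 1 / 2 < ‖Matrix.toEuclideanCLM (𝕜 := ℂ) (M k α)‖}.Finite) :
    (∀ α, Summable fun k => β k • ((1 : Matrix (Fin (nn α)) (Fin (nn α)) ℂ) - M k α)) ∧
    (∀ α, (∑' k, β k • ((1 : Matrix (Fin (nn α)) (Fin (nn α)) ℂ) - M k α)).IsHermitian ∧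
      (∑' k, β k • ((1 : Matrix (Fin (nn α)) (Fin (nn α)) ℂ) - M k α)).PosSemidef) ∧
    (∀ C : ℝ, 0 < C → ∃ G : Finset I, ∀ α ∉ G,
      ((∑' k, β k • ((1 : Matrix (Fin (nn α)) (Fin (nn α)) ℂ) - M k α))
        - C • (1 : Matrix (Fin (nn α)) (Fin (nn α)) ℂ)).PosSemidef) :=
  statement8_general nn F hFmono hFcover β hβpos hβtop ε hsum M hherm hnorm hclose hfin
end
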